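/- arXiv:1402.6807 — 5 statements merged into one kernel-verified Lean document; each statement's English description precedes it below -/
import Mathlib

section
/- Let p be prime and L ∈ M_{p×p}(F_p). Then L is a difference matrix (for all i ≠ j, k ↦ L_{i,k} − L_{j,k} is bijective on F_p) if and only if for all indices with 0 ≤ a < i ≤ p−1 and 0 ≤ b < j ≤ p−1, one has L_{i,j} ≠ L_{i,b} + L_{a,j} − L_{a,b}. -/
/-!
The condition says exactly that `k ↦ L i k - L a k` takes different values at `b < j`, i.e. that
this row difference is injective; since swapping the two rows negates it, pairs `a < i` suffice.
A map `Fin p → ZMod p` is injective iff bijective, as both sides have `p` elements.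
-/

open Function

section DifferenceMatrix

variable {ι κ G : Type*} [LinearOrder κ] [AddCommGroup G]

lemma Matrix.injective_sub_rows_iff (L : Matrix ι κ G) (i a : ι) :
    Injective (fun k => L i k - L a k) ↔ ∀ j b, b < j → L i j ≠ L i b + L a j - L a b := by
  rw [injective_iff_pairwise_ne, pairwise_iff_gt]
  refine forall₃_congr fun j b _ => not_congr ?_
  exact sub_eq_iff_eq_add.trans (by rw [sub_add_eq_add_sub])

lemma Matrix.pairwise_injective_sub_rows_iff [LinearOrder ι] (L : Matrix ι κ G) :
    Pairwise (fun i a => Injective fun k => L i k - L a k) ↔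
      ∀ i j a b, a < i → b < j → L i j ≠ L i b + L a j - L a b := by
  have : Std.Symm fun i a => Injective fun k => L i k - L a k :=
    ⟨fun i a h k l hkl => h (by simpa using congrArg Neg.neg hkl)⟩
  rw [pairwise_iff_gt]
  simp only [L.injective_sub_rows_iff]
  exact ⟨fun h i j a b ha hb => h ha j b hb, fun h i a ha j b hb => h i j a b ha hb⟩

end DifferenceMatrix

theorem stmt_3_general (p : ℕ) (L : Matrix (Fin p) (Fin p) (ZMod p)) :
    (∀ i j : Fin p, i ≠ j → Function.Bijective fun k => L i k - L j k) ↔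
      ∀ i j a b : Fin p, a < i → b < j → L i j ≠ L i b + L a j - L a b := by
  have bijective_iff_injective (i j : Fin p) :
      Bijective (fun k => L i k - L j k) ↔ Injective fun k => L i k - L j k :=
    have : NeZero p := .of_pos i.pos
    (Fintype.bijective_iff_injective_and_card _).trans (and_iff_left (by simp))
  simp only [bijective_iff_injective]
  exact L.pairwise_injective_sub_rows_iff

/-- `L` is a difference matrix iff `L i j ≠ L i b + L a j - L a b` whenever `a < i`, `b < j`. -/
theorem stmt_3 (p : ℕ) (hp : p.Prime) (L : Matrix (Fin p) (Fin p) (ZMod p)) :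
    (∀ i j : Fin p, i ≠ j → Function.Bijective fun k => L i k - L j k) ↔
      ∀ i j a b : Fin p, a < i → b < j → L i j ≠ L i b + L a j - L a b :=
  stmt_3_general p L
end

section
/- Let H = (ξ_p^{E_{i,j}}) be a fully normalized Butson–Hadamard matrix of type (p,p), let C be the p×p cyclic permutation matrix corresponding to α ↦ α+1 on F_p, and P(H) the p²×p² block matrix (C^{E_{i,j}}). Then the (p²+p+1)×(p²+p+1) matrix Q(H) with block structure [[1, J_{1,p}, O], [J_{p,1}, O, D], [O, Dᵀ, P(H)]] (where D is the p×p² block-diagonal matrix of all-ones row vectors) is the incidence matrix of a projective plane of order p; i.e., Q(H)Q(H)ᵀ = pI + J. -/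
/-!
The only nontrivial block of `Q Qᵀ` is the point–point block, whose `((a, b), (c, d))` entry
for `a ≠ c` counts the `e` with `E a e - E c e = d - b`. Orthogonality of rows `a` and `c` of `H`
says `∑ₑ ζ ^ (E a e - E c e) = 0`, i.e. `∑ₛ Nₛ ζ ^ s = 0` where `Nₛ` counts the `e` with
difference `s`. As the minimal polynomial of `ζ` over `ℚ` is `1 + X + ⋯ + X ^ (p - 1)`, all `Nₛ`
are equal, hence all equal to `1`: every row difference of `E` is a permutation of `ZMod p`.
-/

/-- The incidence matrix `Q(H)` built from a fully normalized Butson–Hadamard matrix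
`H = (ξ_p^{E i j})`. Rows/columns indexed by `Unit ⊕ ZMod p ⊕ ZMod p × ZMod p`. -/
def Qmat (p : ℕ) (E : Matrix (ZMod p) (ZMod p) (ZMod p)) :
    Matrix (Unit ⊕ ZMod p ⊕ ZMod p × ZMod p) (Unit ⊕ ZMod p ⊕ ZMod p × ZMod p) ℤ :=
  fun r c =>
    match r, c with
    | Sum.inl _, Sum.inl _ => 1
    | Sum.inl _, Sum.inr (Sum.inl _) => 1
    | Sum.inl _, Sum.inr (Sum.inr _) => 0
    | Sum.inr (Sum.inl _), Sum.inl _ => 1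
    | Sum.inr (Sum.inl _), Sum.inr (Sum.inl _) => 0
    | Sum.inr (Sum.inl i), Sum.inr (Sum.inr (a, _)) => if a = i then 1 else 0
    | Sum.inr (Sum.inr _), Sum.inl _ => 0
    | Sum.inr (Sum.inr (a, _)), Sum.inr (Sum.inl j) => if a = j then 1 else 0
    | Sum.inr (Sum.inr (a, b)), Sum.inr (Sum.inr (c, d)) =>
        if d = b + E a c then 1 else 0

open Finset Polynomial Function

section RootsOfUnity

variable {K : Type*} [Field K] [CharZero K] {p : ℕ} [NeZero p] {ζ : K}

theorem IsPrimitiveRoot.eq_of_sum_mul_pow_val_eq_zero (hp : p.Prime) (hζ : IsPrimitiveRoot ζ p)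
    (c : ZMod p → ℚ) (h : ∑ s, (c s : K) * ζ ^ s.val = 0) (s t : ZMod p) : c s = c t := by
  have := Fact.mk hp
  set P : ℚ[X] := ∑ s, C (c s) * X ^ s.val
  have hcoeff (s : ZMod p) : P.coeff s.val = c s := by
    simp [P, ZMod.val_injective p |>.eq_iff]
  have hdeg : P.natDegree ≤ p - 1 := natDegree_sum_le_of_forall_le _ _ fun s _ =>
    (natDegree_C_mul_X_pow_le _ _).trans (Nat.le_sub_one_of_lt s.val_lt)
  obtain ⟨q, hq⟩ : cyclotomic p ℚ ∣ P := by
    rw [cyclotomic_eq_minpoly_rat hζ hp.pos]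
    exact minpoly.dvd ℚ ζ (by simpa [P] using h)
  have hq0 : q.natDegree = 0 := by
    rcases eq_or_ne q 0 with rfl | hq0
    · simp
    have := natDegree_mul (cyclotomic_ne_zero p ℚ) hq0
    rw [← hq, natDegree_cyclotomic, Nat.totient_prime hp] at this
    omega
  have hconst (s : ZMod p) : c s = q.coeff 0 := by
    rw [← hcoeff, hq, eq_C_of_natDegree_eq_zero hq0, coeff_mul_C, cyclotomic_prime,
      finsetSum_coeff]
    simp [coeff_X_pow, s.val_lt]
  rw [hconst, hconst]

theorem IsPrimitiveRoot.surjective_of_sum_pow_val_eq_zero (hp : p.Prime)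
    (hζ : IsPrimitiveRoot ζ p) (g : ZMod p → ZMod p) (h : ∑ e, ζ ^ (g e).val = 0) :
    Surjective g := by
  have hfiber : ∑ s, ((#{e | g e = s} : ℚ) : K) * ζ ^ s.val = 0 := by
    rw [← h, ← sum_fiberwise' univ g (fun s => ζ ^ s.val)]
    simp
  intro t
  have hcard : #{e | g e = t} = #{e | g e = g 0} := by
    exact_mod_cast hζ.eq_of_sum_mul_pow_val_eq_zero hp _ hfiber t (g 0)
  have hpos : 0 < #{e | g e = t} := by
    rw [hcard]
    exact card_pos.mpr ⟨0, by simp⟩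
  obtain ⟨e, he⟩ := card_pos.mp hpos
  exact ⟨e, (mem_filter.mp he).2⟩

end RootsOfUnity

theorem IsPrimitiveRoot.pow_val_mul_star_pow_val {p : ℕ} [NeZero p] {ζ : ℂ}
    (hζ : IsPrimitiveRoot ζ p) (x y : ZMod p) :
    ζ ^ x.val * star (ζ ^ y.val) = ζ ^ (x - y).val := by
  have hnorm : ‖ζ ^ y.val‖ = 1 := by rw [norm_pow, hζ.norm'_eq_one (NeZero.ne p), one_pow]
  rw [Complex.star_def, ← RCLike.inv_eq_conj hnorm,
    mul_inv_eq_iff_eq_mul₀ (pow_ne_zero _ (hζ.ne_zero (NeZero.ne p))), ← pow_add,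
    pow_eq_pow_mod ((x - y).val + y.val) hζ.pow_eq_one, ← ZMod.val_add, sub_add_cancel]

def IsDifferenceMatrix {ι G : Type*} [AddGroup G] (E : Matrix ι G G) : Prop :=
  ∀ a c, a ≠ c → Bijective fun e => E a e - E c e

theorem isDifferenceMatrix_of_isDiag_mul_conjTranspose {ι : Type*} [Fintype ι] {p : ℕ}
    [NeZero p] (hp : p.Prime) {ζ : ℂ} (hζ : IsPrimitiveRoot ζ p)
    {E : Matrix ι (ZMod p) (ZMod p)} {H : Matrix ι (ZMod p) ℂ}
    (hH : ∀ i j, H i j = ζ ^ (E i j).val) (hdiag : (H * H.conjTranspose).IsDiag) :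
    IsDifferenceMatrix E := by
  intro a c hac
  rw [← Finite.surjective_iff_bijective]
  refine hζ.surjective_of_sum_pow_val_eq_zero hp _ ?_
  rw [← hdiag hac, Matrix.mul_apply]
  simp_rw [Matrix.conjTranspose_apply, hH, hζ.pow_val_mul_star_pow_val]

section IncidenceMatrix

variable {p : ℕ} [NeZero p] {E : Matrix (ZMod p) (ZMod p) (ZMod p)}

theorem card_filter_add_eq_add (hE : IsDifferenceMatrix E) (a b c d : ZMod p) :
    #{x | d + E c x = b + E a x} = if a = c then (if b = d then p else 0) else 1 := by
  split_ifs with hac hbd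
  · simp [hac, hbd]
  · simp [hac, Ne.symm hbd]
  · have hsub (x : ZMod p) : d + E c x = b + E a x ↔ E a x - E c x = d - b := by
      constructor <;> intro h <;> linear_combination -h
    obtain ⟨e, he, huniq⟩ := (hE a c hac).existsUnique (d - b)
    simp_rw [hsub, card_eq_one, eq_singleton_iff_unique_mem]
    exact ⟨e, by simpa using he, fun x hx => huniq x (by simpa using hx)⟩

theorem Qmat_mul_transpose (hE : IsDifferenceMatrix E) :
    Qmat p E * (Qmat p E).transpose = (p : ℤ) • 1 + Matrix.of (fun _ _ => 1) := by
  ext r c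
  rcases r with _ | i | ⟨a, b⟩ <;> rcases c with _ | j | ⟨c, d⟩ <;>
    simp only [Matrix.mul_apply, Matrix.transpose_apply, Matrix.add_apply, Matrix.smul_apply,
      Matrix.one_apply, Matrix.of_apply, Fintype.sum_sum_type, Fintype.sum_prod_type, Qmat] <;>
    simp [card_filter_add_eq_add hE, eq_comm, add_comm]
  split_ifs <;> simp_all

theorem sum_Qmat_row (r : Unit ⊕ ZMod p ⊕ ZMod p × ZMod p) : ∑ c, Qmat p E r c = p + 1 := by
  rcases r with _ | i | ⟨a, b⟩ <;>
    simp only [Fintype.sum_sum_type, Fintype.sum_prod_type, Qmat] <;>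
    simp [apply_ite Finset.card, add_comm]

end IncidenceMatrix

theorem stmt_10_general (p : ℕ) (hp : p.Prime) [NeZero p]
    (E : Matrix (ZMod p) (ZMod p) (ZMod p))
    (H : Matrix (ZMod p) (ZMod p) ℂ)
    (hH : ∀ i j, H i j = Complex.exp (2 * Real.pi * Complex.I / p) ^ (E i j).val)
    (hBH : H * H.conjTranspose = (p : ℂ) • 1) :
    Qmat p E * (Qmat p E).transpose = (p : ℤ) • 1 + Matrix.of (fun _ _ => 1) ∧
    ∀ r, ∑ c, Qmat p E r c = p + 1 := by
  have hζ := Complex.isPrimitiveRoot_exp p hp.ne_zero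
  have hdiag : (H * H.conjTranspose).IsDiag := hBH ▸ Matrix.isDiag_smul_one _ _
  exact ⟨Qmat_mul_transpose (isDifferenceMatrix_of_isDiag_mul_conjTranspose hp hζ hH hdiag),
    sum_Qmat_row⟩

/-- `Q(H) Q(H)ᵀ = p I + J`, so `Q(H)` is the incidence matrix of a projective plane
of order `p` (each row also sums to `p + 1`). -/
theorem stmt_10 (p : ℕ) (hp : p.Prime) [NeZero p]
    (E : Matrix (ZMod p) (ZMod p) (ZMod p))
    (H : Matrix (ZMod p) (ZMod p) ℂ)
    (hH : ∀ i j, H i j = Complex.exp (2 * Real.pi * Complex.I / p) ^ (E i j).val)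
    (hBH : H * H.conjTranspose = (p : ℂ) • 1)
    (hnorm : ∀ i : ZMod p, E 0 i = 0 ∧ E i 0 = 0 ∧ E 1 i = i ∧ E i 1 = i) :
    Qmat p E * (Qmat p E).transpose = (p : ℤ) • 1 + Matrix.of (fun _ _ => 1) ∧
    ∀ r, ∑ c, Qmat p E r c = p + 1 :=
  stmt_10_general p hp E H hH hBH
end

section
/- The map Ψ sending a quadruple (D, σ, y, z) — a projective plane D of order p, an elation σ of order p with respect to a flag (x, L₀), and points y, z off L₀ with x, y, z not collinear — to the fully normalized Butson–Hadamard matrix (ξ_p^{E_{i,j}}) defined by σ^{E_{i,j}}(y_i) ∈ N_j, is surjective onto the set of fully normalized Butson–Hadamard matrices of type (p,p). -/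
/-!
A difference matrix `E` over a finite abelian group `G` yields a projective plane of order `|G|`:
the affine points `G × G` together with a point at infinity for each column of `E` and a center;
the lines are the line at infinity, the verticals through the center, and the translates of the
graphs `i ↦ E i j` of the columns. Graphs of two different columns meet exactly once because the
column differences `i ↦ E i j - E i j'` are bijective, which follows from the injectivity of the row
differences by counting. Translating the second coordinate is an elation with the center and the
line at infinity as flag. For `σ = (·, · + 1)`, `y = (0, 0)` and `z = (1, 0)`, the normalization of
`E` makes `N_j` the graph of column `j` and `y_i = (i, 0)`, so that `σ^{E i j} y_i = (i, E i j)`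
lies on `N_j`.
-/

open Function Set

namespace DifferenceMatrixPlane

variable {G : Type*}

abbrev Point (G : Type*) := (G × G) ⊕ Option G

abbrev LineIndex (G : Type*) := Option G ⊕ (G × G)

def center : Point G := .inr none

theorem card_point [Finite G] : Nat.card (Point G) = Nat.card G ^ 2 + Nat.card G + 1 := by
  simp [sq, add_assoc]

variable [AddCommGroup G]

/-- `inl none` is the line at infinity, `inl (some a)` the vertical `{a} × G` through the center
`inr none`, and `inr (j, t)` the graph of `i ↦ E i j + t` completed by the point `inr (some j)`. -/
def line (E : Matrix G G G) : LineIndex G → Set (Point G)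
  | .inl none, .inl _ => False
  | .inl none, .inr _ => True
  | .inl (some a), .inl (b, _) => b = a
  | .inl (some _), .inr d => d = none
  | .inr (j, t), .inl (i, k) => k = E i j + t
  | .inr (j, _), .inr d => d = some j

section Incidence

variable (E : Matrix G G G)

@[simp] theorem inl_mem_line_inl_none (q : G × G) : .inl q ∉ line E (.inl none) := id
@[simp] theorem inr_mem_line_inl_none (d : Option G) : .inr d ∈ line E (.inl none) := trivial
@[simp] theorem inl_mem_line_inl_some (a b k : G) : .inl (b, k) ∈ line E (.inl (some a)) ↔ b = a :=
  Iff.rfl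
@[simp] theorem inr_mem_line_inl_some (a : G) (d : Option G) :
    .inr d ∈ line E (.inl (some a)) ↔ d = none := Iff.rfl
@[simp] theorem inl_mem_line_inr (j t i k : G) :
    .inl (i, k) ∈ line E (.inr (j, t)) ↔ k = E i j + t := Iff.rfl
@[simp] theorem inr_mem_line_inr (j t : G) (d : Option G) :
    .inr d ∈ line E (.inr (j, t)) ↔ d = some j := Iff.rfl

theorem center_mem_line_iff {ι : LineIndex G} : center ∈ line E ι ↔ ι.isLeft := by
  rcases ι with (_ | a) | ⟨j, t⟩ <;> simp [center]

end Incidence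

def elation (g : G) : Equiv.Perm (Point G) :=
  Equiv.sumCongr ((Equiv.refl G).prodCongr (Equiv.addRight g)) (Equiv.refl _)

@[simp] theorem elation_inl (g a k : G) : elation g (.inl (a, k)) = .inl (a, k + g) := rfl
@[simp] theorem elation_inr (g : G) (d : Option G) : elation g (.inr d) = .inr d := rfl

theorem elation_zero : elation (0 : G) = 1 := by
  ext (⟨a, k⟩ | d) <;> simp

theorem elation_add (g h : G) : elation (g + h) = elation g * elation h := by
  ext (⟨a, k⟩ | d) <;> simp [add_assoc, add_comm g h]

theorem elation_pow (g : G) (n : ℕ) : elation g ^ n = elation (n • g) := by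
  induction n with
  | zero => rw [pow_zero, zero_nsmul, elation_zero]
  | succ n ih => rw [pow_succ, ih, succ_nsmul, elation_add]

theorem elation_eq_one_iff {g : G} : elation g = 1 ↔ g = 0 := by
  refine ⟨fun h => ?_, fun h => h ▸ elation_zero⟩
  simpa using congr($h (.inl (0, 0)))

theorem elation_neg (g : G) : elation (-g) = (elation g)⁻¹ :=
  eq_inv_of_mul_eq_one_left (by rw [← elation_add, neg_add_cancel, elation_zero])

theorem orderOf_elation (g : G) : orderOf (elation g) = addOrderOf g := by
  rw [← orderOf_ofAdd_eq_addOrderOf, orderOf_eq_orderOf_iff]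
  intro n
  rw [elation_pow, elation_eq_one_iff, ← ofAdd_nsmul, ofAdd_eq_one]

theorem elation_apply_of_mem_line_inl_none (E : Matrix G G G) (g : G) {q : Point G}
    (hq : q ∈ line E (.inl none)) : elation g q = q := by
  rcases q with ⟨a, k⟩ | d
  exacts [absurd hq (inl_mem_line_inl_none E _), rfl]

theorem image_elation_line (E : Matrix G G G) (g : G) (ι : LineIndex G) :
    elation g '' line E ι = line E (ι.map id (Prod.map id (· + g))) := by
  rw [Equiv.image_eq_preimage_symm, ← Equiv.Perm.inv_def, ← elation_neg]
  ext (⟨i, k⟩ | d) <;> rcases ι with (_ | a) | ⟨j, t⟩ <;>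
    simp [← sub_eq_add_neg, sub_eq_iff_eq_add, add_assoc]

theorem ncard_line [Finite G] (E : Matrix G G G) (ι : LineIndex G) :
    (line E ι).ncard = Nat.card G + 1 := by
  have ncard_insert_range {q : Point G} {f : G → Point G} (hf : Injective f) (hq : q ∉ range f) :
      (insert q (range f)).ncard = Nat.card G + 1 := by
    rw [ncard_insert_of_notMem hq, ncard_range_of_injective hf]
  rcases ι with (_ | a) | ⟨j, t⟩
  · have : line E (.inl none) = range Sum.inr := by ext (⟨b, k⟩ | d) <;> simp
    rw [this, ncard_range_of_injective Sum.inr_injective, Finite.card_option]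
  · have : line E (.inl (some a)) = insert center (range fun k => .inl (a, k)) := by
      ext (⟨b, k⟩ | d) <;> simp [center, eq_comm]
    rw [this]
    exact ncard_insert_range (fun k k' h => by simpa using h) (by simp [center])
  · have : line E (.inr (j, t)) = insert (.inr (some j)) (range fun i => .inl (i, E i j + t)) := by
      ext (⟨b, k⟩ | d) <;> simp [eq_comm]
    rw [this]
    exact ncard_insert_range (fun i i' h => by simp_all) (by simp)

theorem bijective_sub_col_of_injective_sub_row [Finite G] {E : Matrix G G G}
    (hE : ∀ i i', i ≠ i' → Injective fun k => E i k - E i' k) {j j' : G} (h : j ≠ j') :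
    Bijective fun i => E i j - E i j' := by
  refine Finite.injective_iff_bijective.mp fun i i' hii => ?_
  by_contra hne
  exact h <| hE i i' hne (sub_eq_sub_iff_sub_eq_sub.mp hii)

section Plane

variable {E : Matrix G G G} (hE : ∀ j j', j ≠ j' → Bijective fun i => E i j - E i j')
include hE

theorem line_inr_inter_line_inr_eq_singleton {j j' : G} (t t' : G) (h : j ≠ j') :
    ∃ q, line E (.inr (j, t)) ∩ line E (.inr (j', t')) = {q} := by
  have meet (i : G) : E i j + t = E i j' + t' ↔ E i j - E i j' = t' - t := by
    rw [sub_eq_sub_iff_add_eq_add, add_comm t']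
  obtain ⟨i₀, hi₀⟩ := (hE j j' h).surjective (t' - t)
  refine ⟨.inl (i₀, E i₀ j + t), eq_singleton_iff_unique_mem.2 ⟨⟨rfl, (meet i₀).2 hi₀⟩, ?_⟩⟩
  rintro (⟨i, k⟩ | d) ⟨h₁, h₂⟩
  · simp only [inl_mem_line_inr] at h₁ h₂
    subst h₁
    obtain rfl : i = i₀ := (hE j j' h).injective (((meet i).1 h₂).trans hi₀.symm)
    rfl
  · simp only [inr_mem_line_inr] at h₁ h₂
    exact absurd (Option.some_injective _ (h₁.symm.trans h₂)) h

theorem exists_line_inter_line_eq_singleton {ι ι' : LineIndex G} (h : ι ≠ ι') :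
    ∃ q, line E ι ∩ line E ι' = {q} := by
  rcases ι with (_ | a) | ⟨j, t⟩ <;> rcases ι' with (_ | a') | ⟨j', t'⟩
  · exact absurd rfl h
  · exact ⟨center, by ext (⟨b, k⟩ | d) <;> simp [center]⟩
  · exact ⟨.inr (some j'), by ext (⟨b, k⟩ | d) <;> simp⟩
  · exact ⟨center, by ext (⟨b, k⟩ | d) <;> simp [center]⟩
  · exact ⟨center, by ext (⟨b, k⟩ | d) <;> simp [center]; grind⟩
  · exact ⟨.inl (a, E a j' + t'), by ext (⟨b, k⟩ | d) <;> simp <;> grind⟩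
  · exact ⟨.inr (some j), by ext (⟨b, k⟩ | d) <;> simp⟩
  · exact ⟨.inl (a', E a' j + t), by ext (⟨b, k⟩ | d) <;> simp <;> grind⟩
  · by_cases hj : j = j'
    · subst hj
      exact ⟨.inr (some j), by ext (⟨b, k⟩ | d) <;> simp; grind⟩
    · exact line_inr_inter_line_inr_eq_singleton hE t t' hj

theorem line_injective [Finite G] : Injective (line E) := by
  intro ι ι' h
  by_contra hne
  obtain ⟨q, hq⟩ := exists_line_inter_line_eq_singleton hE hne
  rw [h, inter_self] at hq
  have := ncard_line E ι'
  rw [hq, ncard_singleton] at this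
  have : 0 < Nat.card G := Nat.card_pos
  omega

end Plane

open Classical in
noncomputable def lines [Fintype G] (E : Matrix G G G) : Finset (Set (Point G)) :=
  Finset.univ.image (line E)

section FinitePlane

variable [Fintype G] {E : Matrix G G G}

theorem mem_lines {l : Set (Point G)} : l ∈ lines E ↔ ∃ ι, line E ι = l := by
  simp [lines]

theorem card_lines (hE : ∀ j j', j ≠ j' → Bijective fun i => E i j - E i j') :
    (lines E).card = Nat.card G ^ 2 + Nat.card G + 1 := by
  rw [lines, Finset.card_image_of_injective _ (line_injective hE), Finset.card_univ,
    ← Nat.card_eq_fintype_card]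
  simp [sq]
  ring

theorem ncard_of_mem_lines {l : Set (Point G)} (hl : l ∈ lines E) : l.ncard = Nat.card G + 1 := by
  obtain ⟨ι, rfl⟩ := mem_lines.1 hl
  exact ncard_line E ι

theorem ncard_inter_of_mem_lines (hE : ∀ j j', j ≠ j' → Bijective fun i => E i j - E i j')
    {l l' : Set (Point G)} (hl : l ∈ lines E) (hl' : l' ∈ lines E) (h : l ≠ l') :
    (l ∩ l').ncard = 1 := by
  obtain ⟨ι, rfl⟩ := mem_lines.1 hl
  obtain ⟨ι', rfl⟩ := mem_lines.1 hl'
  obtain ⟨q, hq⟩ := exists_line_inter_line_eq_singleton hE (ne_of_apply_ne _ h)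
  rw [hq, ncard_singleton]

theorem image_elation_mem_lines (g : G) {l : Set (Point G)} (hl : l ∈ lines E) :
    elation g '' l ∈ lines E := by
  obtain ⟨ι, rfl⟩ := mem_lines.1 hl
  rw [image_elation_line]
  exact mem_lines.2 ⟨_, rfl⟩

theorem image_elation_of_center_mem (g : G) {l : Set (Point G)} (hl : l ∈ lines E)
    (hc : center ∈ l) : elation g '' l = l := by
  obtain ⟨ι, rfl⟩ := mem_lines.1 hl
  obtain ⟨o, rfl⟩ := Sum.isLeft_iff.1 ((center_mem_line_iff E).1 hc)
  rw [image_elation_line]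
  rfl

theorem eq_of_inl_mem_of_center_mem {l : Set (Point G)} (hl : l ∈ lines E) (hc : center ∈ l)
    {a b k k' : G} (ha : .inl (a, k) ∈ l) (hb : .inl (b, k') ∈ l) : a = b := by
  obtain ⟨ι, rfl⟩ := mem_lines.1 hl
  obtain ⟨o, rfl⟩ := Sum.isLeft_iff.1 ((center_mem_line_iff E).1 hc)
  rcases o with _ | c
  · simp at ha
  · simp only [inl_mem_line_inl_some] at ha hb
    rw [ha, hb]

end FinitePlane

end DifferenceMatrixPlane

open DifferenceMatrixPlane

/-- The map `Ψ` is surjective: every fully normalized Butson–Hadamard matrix of type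
`(p,p)` (given by its fully normalized difference exponent matrix `E`) arises from some
quadruple `(D, σ, y, z)` consisting of a projective plane of order `p`, an elation `σ`
of order `p` with respect to a flag `(x, L₀)`, and points `y, z ∉ L₀` with `x, y, z`
not collinear, via `σ^{E i j} (Y i) ∈ N j`. -/
theorem stmt_12 (p : ℕ) (hp : p.Prime)
    (E : Matrix (ZMod p) (ZMod p) (ZMod p))
    (hdiff : ∀ i j : ZMod p, i ≠ j → Function.Bijective fun k => E i k - E j k)
    (hnorm : ∀ i : ZMod p, E 0 i = 0 ∧ E i 0 = 0 ∧ E 1 i = i ∧ E i 1 = i) :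
    ∃ (P : Type) (Lines : Finset (Set P)) (σ : Equiv.Perm P) (x : P) (L₀ : Set P)
      (y z : P) (N : ZMod p → Set P) (Y : ZMod p → P),
      Nat.card P = p ^ 2 + p + 1 ∧ Lines.card = p ^ 2 + p + 1 ∧
      (∀ l ∈ Lines, l.ncard = p + 1) ∧
      (∀ l ∈ Lines, ∀ l' ∈ Lines, l ≠ l' → (l ∩ l').ncard = 1) ∧
      (∀ l ∈ Lines, ⇑σ '' l ∈ Lines) ∧ orderOf σ = p ∧
      L₀ ∈ Lines ∧ x ∈ L₀ ∧
      (∀ a ∈ L₀, σ a = a) ∧ (∀ l ∈ Lines, x ∈ l → ⇑σ '' l = l) ∧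
      y ∉ L₀ ∧ z ∉ L₀ ∧ (∀ l ∈ Lines, ¬(x ∈ l ∧ y ∈ l ∧ z ∈ l)) ∧
      (∀ i : ZMod p, N i ∈ Lines ∧ y ∈ N i ∧ (σ ^ i.val) z ∈ N i) ∧
      (∀ i : ZMod p, Y i ∈ N 0 ∧ (σ ^ i.val) (Y i) ∈ N 1) ∧
      ∀ i j, (σ ^ (E i j).val) (Y i) ∈ N j := by
  have : Fact p.Prime := ⟨hp⟩
  have hE (j j' : ZMod p) (h : j ≠ j') : Function.Bijective fun i => E i j - E i j' :=
    bijective_sub_col_of_injective_sub_row (fun i i' hi => (hdiff i i' hi).injective) h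
  have elation_one_pow_val (i : ZMod p) : elation (1 : ZMod p) ^ i.val = elation i := by
    rw [elation_pow, nsmul_one, ZMod.natCast_zmod_val]
  refine ⟨Point (ZMod p), lines E, elation 1, center, line E (.inl none), .inl (0, 0), .inl (1, 0),
    fun j => line E (.inr (j, 0)), fun i => .inl (i, 0),
    by rw [card_point, Nat.card_zmod], by rw [card_lines hE, Nat.card_zmod],
    fun l hl => by rw [ncard_of_mem_lines hl, Nat.card_zmod],
    fun l hl l' hl' => ncard_inter_of_mem_lines hE hl hl',
    fun l => image_elation_mem_lines 1, by rw [orderOf_elation, ZMod.addOrderOf_one],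
    mem_lines.2 ⟨_, rfl⟩, trivial, fun q => elation_apply_of_mem_line_inl_none E 1,
    fun l hl => image_elation_of_center_mem 1 hl,
    inl_mem_line_inl_none E _, inl_mem_line_inl_none E _,
    fun l hl ⟨hc, hy, hz⟩ => zero_ne_one (eq_of_inl_mem_of_center_mem hl hc hy hz),
    fun i => ⟨mem_lines.2 ⟨_, rfl⟩, ?_⟩, fun i => ?_, fun i j => ?_⟩ <;>
  simp [elation_one_pow_val, hnorm]
end

section
/- If D is a Desarguesian projective plane of order p (p prime), σ an elation of order p with respect to a flag (x, L₀), and y, z points off L₀ with x,y,z not collinear, then the associated exponent matrix satisfies E_{i,j} = ij for all i,j ∈ F_p; i.e., Ψ(D, σ, y, z) is the Fourier matrix (ξ_p^{ij}). -/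
/-!
Transport everything to `PG(2, p)` through the given bijection. There three points are collinear
iff the triple product of their coordinate vectors vanishes, and an elation with axis `A` and
centre `X` is induced by a transvection `v ↦ v + c (A ⬝ᵥ v) X`: a point `P` off the axis stays on
the line `XP`, so it moves to `P + f X` for some `f`, and since the line through two such points
meets the axis in a fixed point, `f` is the same for both. The `n`-th power of the elation is the
transvection with `n c`, and the collinearities defining `Y i` and `E i j` (on the lines `N 0`,
`N 1` and `N j`) become linear equations in a few triple products, whose solution is
`E i j = i * j`.
-/

open Matrix Projectivization
open scoped LinearAlgebra.Projectivization

section TripleProduct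

variable {R : Type*} [CommRing R]

theorem triple_product_smul_eq (p q r s : Fin 3 → R) :
    (p ⬝ᵥ q ⨯₃ r) • s = (s ⬝ᵥ q ⨯₃ r) • p + (p ⬝ᵥ s ⨯₃ r) • q + (p ⬝ᵥ q ⨯₃ s) • r := by
  simp_rw [cross_apply, vec3_dotProduct]
  ext i
  fin_cases i <;>
  · simp only [Fin.isValue, cons_val, Pi.add_apply, Pi.smul_apply, smul_eq_mul, Fin.reduceFinMk]
    ring

theorem triple_product_add_smul (y z w u : Fin 3 → R) (s t : R) :
    y ⬝ᵥ (z + s • u) ⨯₃ (w + t • u) =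
      y ⬝ᵥ z ⨯₃ w + t * (y ⬝ᵥ z ⨯₃ u) + s * (y ⬝ᵥ u ⨯₃ w) := by
  simp only [map_add, map_smul, LinearMap.add_apply, LinearMap.smul_apply, _root_.cross_self,
    smul_zero, dotProduct_add, dotProduct_smul, smul_eq_mul, dotProduct_zero]
  ring

theorem triple_product_cross_single {u a : Fin 3 → R} (hau : a ⬝ᵥ u = 0) (v : Fin 3 → R)
    (k : Fin 3) : u ⬝ᵥ v ⨯₃ (a ⨯₃ Pi.single k 1) = -(a ⬝ᵥ v * u k) := by
  rw [cross_cross_eq_smul_sub_smul', dotProduct_sub, dotProduct_smul, dotProduct_smul,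
    dotProduct_comm u a, hau, dotProduct_single]
  simp [smul_eq_mul]

end TripleProduct

section Transvection

variable {K : Type*} [Field K]

abbrev transvection₃ (a u : Fin 3 → K) : (Fin 3 → K) →ₗ[K] Fin 3 → K :=
  LinearMap.transvection (dotProductEquiv K (Fin 3) a) u

lemma transvection₃_apply (a u v : Fin 3 → K) : transvection₃ a u v = v + (a ⬝ᵥ v) • u := by
  simp [LinearMap.transvection.apply]

lemma transvection₃_ne_zero {a u v : Fin 3 → K} (hau : a ⬝ᵥ u = 0) (hv : v ≠ 0) :
    transvection₃ a u v ≠ 0 :=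
  (LinearEquiv.transvection (f := dotProductEquiv K (Fin 3) a) (v := u)
    (by simpa using hau)).map_ne_zero_iff.2 hv

lemma transvection₃_smul_ne_zero {a u v : Fin 3 → K} (hau : a ⬝ᵥ u = 0) (s : K) (hv : v ≠ 0) :
    transvection₃ a (s • u) v ≠ 0 :=
  transvection₃_ne_zero (by rw [dotProduct_smul, hau, smul_zero]) hv

lemma transvection₃_transvection₃ {a u w : Fin 3 → K} (haw : a ⬝ᵥ w = 0) (v : Fin 3 → K) :
    transvection₃ a u (transvection₃ a w v) = transvection₃ a (u + w) v :=
  LinearMap.transvection.comp_of_left_eq_apply (by simpa using haw)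

end Transvection

section ProjectivePlane

variable {K : Type*} [Field K]

def projLine (W : ℙ K (Fin 3 → K)) : Set (ℙ K (Fin 3 → K)) := {P | W.orthogonal P}

lemma mem_projLine_iff {W P : ℙ K (Fin 3 → K)} : P ∈ projLine W ↔ W.rep ⬝ᵥ P.rep = 0 := by
  conv_lhs => rw [← W.mk_rep, ← P.mk_rep]
  exact orthogonal_mk _ _

lemma projLine_eq (W : ℙ K (Fin 3 → K)) : projLine W = {P | W.rep ⬝ᵥ P.rep = 0} :=
  Set.ext fun _ ↦ mem_projLine_iff

lemma mk_mem_projLine_iff {W : ℙ K (Fin 3 → K)} {v : Fin 3 → K} (hv : v ≠ 0) :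
    mk K v hv ∈ projLine W ↔ W.rep ⬝ᵥ v = 0 := by
  conv_lhs => rw [← W.mk_rep]
  exact orthogonal_mk _ _

def ProjCollinear (P Q R : ℙ K (Fin 3 → K)) : Prop :=
  ∃ W, P ∈ projLine W ∧ Q ∈ projLine W ∧ R ∈ projLine W

lemma projCollinear_mk_iff {u v w : Fin 3 → K} (hu : u ≠ 0) (hv : v ≠ 0) (hw : w ≠ 0) :
    ProjCollinear (mk K u hu) (mk K v hv) (mk K w hw) ↔ u ⬝ᵥ v ⨯₃ w = 0 := by
  rw [triple_product_eq_det]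
  refine Iff.trans ?_ (exists_mulVec_eq_zero_iff (M := of ![u, v, w]))
  constructor
  · rintro ⟨W, hu', hv', hw'⟩
    rw [mk_mem_projLine_iff] at hu' hv' hw'
    refine ⟨W.rep, W.rep_nonzero, ?_⟩
    ext i
    fin_cases i
    exacts [(dotProduct_comm _ _).trans hu', (dotProduct_comm _ _).trans hv',
      (dotProduct_comm _ _).trans hw']
  · rintro ⟨a, ha, h⟩
    refine ⟨mk K a ha, ?_, ?_, ?_⟩ <;> refine (orthogonal_mk _ _).2 ((dotProduct_comm _ _).trans ?_)
    exacts [congrFun h 0, congrFun h 1, congrFun h 2]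

lemma projCollinear_iff {P Q R : ℙ K (Fin 3 → K)} :
    ProjCollinear P Q R ↔ P.rep ⬝ᵥ Q.rep ⨯₃ R.rep = 0 := by
  conv_lhs => rw [← P.mk_rep, ← Q.mk_rep, ← R.mk_rep]
  exact projCollinear_mk_iff _ _ _

lemma pow_apply_mk_eq_transvection₃ {τ : Equiv.Perm (ℙ K (Fin 3 → K))} {a u : Fin 3 → K}
    (hau : a ⬝ᵥ u = 0)
    (hτ : ∀ v (hv : v ≠ 0),
      τ (mk K v hv) = mk K (transvection₃ a u v) (transvection₃_ne_zero hau hv))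
    (n : ℕ) {v : Fin 3 → K} (hv : v ≠ 0) :
    (τ ^ n) (mk K v hv) =
      mk K (transvection₃ a ((n : K) • u) v) (transvection₃_smul_ne_zero hau n hv) := by
  induction n with
  | zero => simp
  | succ n ih =>
    rw [pow_succ', Equiv.Perm.mul_apply, ih, hτ]
    simp_rw [transvection₃_transvection₃ (by simp [dotProduct_smul, hau] : a ⬝ᵥ (n : K) • u = 0),
      Nat.cast_succ, add_smul, one_smul, add_comm]

end ProjectivePlane

section Elation

variable {K : Type*} [Field K] {A X : ℙ K (Fin 3 → K)}
  {τ : ℙ K (Fin 3 → K) → ℙ K (Fin 3 → K)}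

lemma exists_apply_mk_eq_transvection₃ (hXA : X ∈ projLine A) (hτ : Function.Injective τ)
    (hfix : ∀ P ∈ projLine A, τ P = P) (hcenter : ∀ P, ProjCollinear X P (τ P))
    {v : Fin 3 → K} (hv : v ≠ 0) (hav : A.rep ⬝ᵥ v ≠ 0) :
    ∃ f : K, τ (mk K v hv) = mk K (transvection₃ A.rep (f • X.rep) v)
      (transvection₃_smul_ne_zero (mem_projLine_iff.1 hXA) f hv) := by
  have hau : A.rep ⬝ᵥ X.rep = 0 := mem_projLine_iff.1 hXA
  have hcol := hcenter (mk K v hv)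
  have hA : τ (mk K v hv) ∉ projLine A := fun h ↦
    hav ((mk_mem_projLine_iff hv).1 (hτ (hfix _ h) ▸ h))
  generalize τ (mk K v hv) = R at hcol hA ⊢
  rw [mem_projLine_iff] at hA
  have huvr : X.rep ⬝ᵥ v ⨯₃ R.rep = 0 := by
    rwa [← X.mk_rep, ← R.mk_rep, projCollinear_mk_iff] at hcol
  obtain ⟨k, hk⟩ : ∃ k, X.rep k ≠ 0 := Function.ne_iff.1 X.rep_nonzero
  set t := A.rep ⨯₃ Pi.single k 1
  have hD : X.rep ⬝ᵥ v ⨯₃ t ≠ 0 := by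
    rw [triple_product_cross_single hau]
    exact neg_ne_zero.2 (mul_ne_zero hav hk)
  -- Cramer's rule writes `R.rep` in terms of `X.rep` and `v`
  have hr := triple_product_smul_eq X.rep v t R.rep
  rw [huvr, zero_smul, add_zero] at hr
  set D := X.rep ⬝ᵥ v ⨯₃ t
  set α := R.rep ⬝ᵥ v ⨯₃ t
  set β := X.rep ⬝ᵥ R.rep ⨯₃ t
  have hβ : D * (A.rep ⬝ᵥ R.rep) = β * (A.rep ⬝ᵥ v) := by
    simpa [dotProduct_add, dotProduct_smul, hau] using congrArg (A.rep ⬝ᵥ ·) hr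
  have hβ0 : β ≠ 0 := by
    rintro h0
    rw [h0, zero_mul] at hβ
    exact mul_ne_zero hD hA hβ
  refine ⟨α / (β * (A.rep ⬝ᵥ v)), ?_⟩
  rw [← R.mk_rep, mk_eq_mk_iff']
  refine ⟨β / D, smul_right_injective _ hD ?_⟩
  simp only [hr, transvection₃_apply, smul_add, smul_smul]
  rw [add_comm]
  congr 2 <;> field_simp

lemma eq_of_apply_mk_eq_transvection₃ (hXA : X ∈ projLine A)
    (hcol : ∀ P Q R, ProjCollinear P Q R → ProjCollinear (τ P) (τ Q) (τ R))
    (hfix : ∀ P ∈ projLine A, τ P = P) {p q : Fin 3 → K} (hp : p ≠ 0) (hq : q ≠ 0)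
    (hap : A.rep ⬝ᵥ p ≠ 0) (haq : A.rep ⬝ᵥ q ≠ 0) (hpq : X.rep ⬝ᵥ p ⨯₃ q ≠ 0) {f g : K}
    (hf : τ (mk K p hp) = mk K (transvection₃ A.rep (f • X.rep) p)
      (transvection₃_smul_ne_zero (mem_projLine_iff.1 hXA) f hp))
    (hg : τ (mk K q hq) = mk K (transvection₃ A.rep (g • X.rep) q)
      (transvection₃_smul_ne_zero (mem_projLine_iff.1 hXA) g hq)) :
    f = g := by
  -- the point where the line through `p` and `q` meets the fixed line
  set d := (A.rep ⬝ᵥ q) • p - (A.rep ⬝ᵥ p) • q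
  have had : A.rep ⬝ᵥ d = 0 := by
    simp only [d, dotProduct_sub, dotProduct_smul, smul_eq_mul]
    ring
  have hd : d ≠ 0 := by
    intro h0
    have := congrArg (X.rep ⬝ᵥ p ⨯₃ ·) h0
    simp only [d, map_sub, map_smul, map_zero, _root_.cross_self, smul_zero, zero_sub,
      dotProduct_neg, dotProduct_smul, smul_eq_mul, dotProduct_zero, neg_eq_zero] at this
    exact mul_ne_zero hap hpq this
  have hpqd : ProjCollinear (mk K p hp) (mk K q hq) (mk K d hd) := by
    rw [projCollinear_mk_iff]
    simp only [d, map_sub, map_smul, _root_.cross_self, dotProduct_smul, dot_cross_self,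
      smul_zero, sub_zero, smul_eq_mul, mul_zero]
  have h := hcol _ _ _ hpqd
  rw [hf, hg, hfix _ ((mk_mem_projLine_iff hd).2 had), projCollinear_mk_iff] at h
  have key : (f - g) * (A.rep ⬝ᵥ p) * (A.rep ⬝ᵥ q) * (X.rep ⬝ᵥ p ⨯₃ q) = 0 := by
    simp only [d, transvection₃_apply, cross_apply, vec3_dotProduct] at h ⊢
    simp only [Fin.isValue, cons_val, Pi.add_apply, Pi.sub_apply, Pi.smul_apply,
      smul_eq_mul] at h ⊢
    linear_combination -h
  simpa [sub_eq_zero, hap, haq, hpq] using key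

theorem exists_transvection₃_of_elation (hXA : X ∈ projLine A) (hτ : Function.Injective τ)
    (hcol : ∀ P Q R, ProjCollinear P Q R → ProjCollinear (τ P) (τ Q) (τ R))
    (hfix : ∀ P ∈ projLine A, τ P = P) (hcenter : ∀ P, ProjCollinear X P (τ P)) :
    ∃ c : K, ∀ v (hv : v ≠ 0), τ (mk K v hv) = mk K (transvection₃ A.rep (c • X.rep) v)
      (transvection₃_smul_ne_zero (mem_projLine_iff.1 hXA) c hv) := by
  have hau : A.rep ⬝ᵥ X.rep = 0 := mem_projLine_iff.1 hXA
  obtain ⟨P₀, hP₀⟩ := exists_not_self_orthogonal A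
  have hav₀ : A.rep ⬝ᵥ P₀.rep ≠ 0 := fun h ↦ hP₀ (mem_projLine_iff.2 h)
  obtain ⟨c, hc⟩ := exists_apply_mk_eq_transvection₃ hXA hτ hfix hcenter P₀.rep_nonzero hav₀
  refine ⟨c, fun v hv ↦ ?_⟩
  by_cases hav : A.rep ⬝ᵥ v = 0
  · convert hfix _ ((mk_mem_projLine_iff hv).2 hav)
    simp [transvection₃_apply, hav]
  obtain ⟨f, hf⟩ := exists_apply_mk_eq_transvection₃ hXA hτ hfix hcenter hv hav
  suffices f = c by rwa [← this]
  by_cases h : X.rep ⬝ᵥ P₀.rep ⨯₃ v = 0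
  · -- compare both with a third point `q` that is not collinear with either of them and `X`
    obtain ⟨k, hk⟩ : ∃ k, X.rep k ≠ 0 := Function.ne_iff.1 X.rep_nonzero
    set q := v + A.rep ⨯₃ Pi.single k 1
    have haq : A.rep ⬝ᵥ q ≠ 0 := by simpa [q, dotProduct_add, dot_self_cross] using hav
    have hq : q ≠ 0 := fun h0 ↦ haq (by rw [h0, dotProduct_zero])
    have hXq : ∀ w, X.rep ⬝ᵥ w ⨯₃ q = X.rep ⬝ᵥ w ⨯₃ v - A.rep ⬝ᵥ w * X.rep k := fun w ↦ by
      rw [map_add, dotProduct_add, triple_product_cross_single hau, sub_eq_add_neg]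
    obtain ⟨g, hg⟩ := exists_apply_mk_eq_transvection₃ hXA hτ hfix hcenter hq haq
    have hvq : X.rep ⬝ᵥ v ⨯₃ q ≠ 0 := by
      rw [hXq, _root_.cross_self, dotProduct_zero, zero_sub, neg_ne_zero]
      exact mul_ne_zero hav hk
    have hv₀q : X.rep ⬝ᵥ P₀.rep ⨯₃ q ≠ 0 := by
      rw [hXq, h, zero_sub, neg_ne_zero]
      exact mul_ne_zero hav₀ hk
    exact (eq_of_apply_mk_eq_transvection₃ hXA hcol hfix hv hq hav haq hvq hf hg).trans
      (eq_of_apply_mk_eq_transvection₃ hXA hcol hfix _ hq hav₀ haq hv₀q hc hg).symm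
  · exact (eq_of_apply_mk_eq_transvection₃ hXA hcol hfix _ hv hav₀ hav h hc hf).symm

end Elation

section Fourier

variable {K : Type*} [Field K]

theorem eq_mul_of_collinear_transvection₃ {a u y z w : Fin 3 → K} {i j k : K}
    (hy : a ⬝ᵥ y ≠ 0) (hz : a ⬝ᵥ z ≠ 0) (hw : w ≠ 0) (hyzu : y ⬝ᵥ z ⨯₃ u ≠ 0)
    (h₀ : y ⬝ᵥ z ⨯₃ w = 0)
    (h₁ : y ⬝ᵥ transvection₃ a u z ⨯₃ transvection₃ a (i • u) w = 0)
    (hj : y ⬝ᵥ transvection₃ a (j • u) z ⨯₃ transvection₃ a (k • u) w = 0) :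
    k = i * j := by
  simp only [transvection₃_apply, smul_smul, triple_product_add_smul, h₀, zero_add] at h₁ hj
  have haw : a ⬝ᵥ w ≠ 0 := by
    intro haw
    simp only [haw, zero_mul, zero_add, mul_eq_zero, hz, false_or] at h₁
    have hcr := triple_product_smul_eq y z u w
    rw [← neg_eq_zero, ← dotProduct_neg, cross_anticomm] at h₁
    rw [h₁, h₀, zero_smul, add_zero, zero_smul, add_zero] at hcr
    have hwzu : w ⬝ᵥ z ⨯₃ u = 0 := by
      simpa [dotProduct_smul, haw, hy] using congrArg (a ⬝ᵥ ·) hcr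
    rw [hwzu, zero_smul, smul_eq_zero] at hcr
    exact hcr.elim hyzu hw
  have key : (k - i * j) * (a ⬝ᵥ w) * (y ⬝ᵥ z ⨯₃ u) = 0 := by linear_combination hj - j * h₁
  simpa [sub_eq_zero, haw, hyzu] using key

end Fourier

section Coordinatization

variable {K : Type*} [Field K] {P : Type*} {Lines : Set (Set P)} {e : ℙ K (Fin 3 → K) ≃ P}

lemma projCollinear_iff_exists_mem (hLines : ∀ l, l ∈ Lines ↔ ∃ W, l = e '' projLine W)
    {A B C : ℙ K (Fin 3 → K)} :
    ProjCollinear A B C ↔ ∃ l ∈ Lines, e A ∈ l ∧ e B ∈ l ∧ e C ∈ l := by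
  simp only [hLines]
  constructor
  · rintro ⟨W, hA, hB, hC⟩
    exact ⟨_, ⟨W, rfl⟩, Set.mem_image_of_mem e hA, Set.mem_image_of_mem e hB,
      Set.mem_image_of_mem e hC⟩
  · rintro ⟨_, ⟨W, rfl⟩, hA, hB, hC⟩
    exact ⟨W, e.injective.mem_set_image.1 hA, e.injective.mem_set_image.1 hB,
      e.injective.mem_set_image.1 hC⟩

lemma triple_product_eq_zero_of_mem (hLines : ∀ l, l ∈ Lines ↔ ∃ W, l = e '' projLine W)
    {l : Set P} (hl : l ∈ Lines) {u v w : Fin 3 → K} {hu : u ≠ 0} {hv : v ≠ 0} {hw : w ≠ 0}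
    (hul : e (mk K u hu) ∈ l) (hvl : e (mk K v hv) ∈ l) (hwl : e (mk K w hw) ∈ l) :
    u ⬝ᵥ v ⨯₃ w = 0 :=
  (projCollinear_mk_iff hu hv hw).1 ((projCollinear_iff_exists_mem hLines).2 ⟨l, hl, hul, hvl, hwl⟩)

theorem exists_pow_apply_eq_transvection₃ (hLines : ∀ l, l ∈ Lines ↔ ∃ W, l = e '' projLine W)
    {σ : Equiv.Perm P} (hσ : σ ≠ 1) (hauto : ∀ l ∈ Lines, ⇑σ '' l ∈ Lines)
    {A X : ℙ K (Fin 3 → K)} (hXA : X ∈ projLine A) (hfix : ∀ Q ∈ e '' projLine A, σ Q = Q)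
    (hcenter : ∀ l ∈ Lines, e X ∈ l → ⇑σ '' l = l) :
    ∃ c : K, c ≠ 0 ∧ ∀ (n : ℕ) (Q : P), (σ ^ n) Q =
      e (mk K (transvection₃ A.rep ((n * c : K) • X.rep) (e.symm Q).rep)
        (transvection₃_smul_ne_zero (mem_projLine_iff.1 hXA) _ (e.symm Q).rep_nonzero)) := by
  set τ := e.symm.permCongr σ
  have he : ∀ R, e (τ R) = σ (e R) := fun R ↦ by simp [τ]
  have hcol : ∀ P Q R, ProjCollinear P Q R → ProjCollinear (τ P) (τ Q) (τ R) := by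
    simp only [projCollinear_iff_exists_mem hLines, he]
    rintro P Q R ⟨l, hl, hP, hQ, hR⟩
    exact ⟨_, hauto l hl, Set.mem_image_of_mem σ hP, Set.mem_image_of_mem σ hQ,
      Set.mem_image_of_mem σ hR⟩
  have hτfix : ∀ R ∈ projLine A, τ R = R := fun R hR ↦
    e.injective (by rw [he, hfix _ (Set.mem_image_of_mem e hR)])
  have hτcenter : ∀ R, ProjCollinear X R (τ R) := by
    intro R
    obtain ⟨l, hl, hX, hR, -⟩ := (projCollinear_iff_exists_mem hLines).1
      (projCollinear_iff.2 (by rw [_root_.cross_self, dotProduct_zero]) : ProjCollinear X R R)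
    refine (projCollinear_iff_exists_mem hLines).2 ⟨l, hl, hX, hR, ?_⟩
    rw [he, ← hcenter l hl hX]
    exact Set.mem_image_of_mem σ hR
  obtain ⟨c, hc⟩ := exists_transvection₃_of_elation hXA τ.injective hcol hτfix hτcenter
  refine ⟨c, ?_, fun n Q ↦ ?_⟩
  · rintro rfl
    refine hσ (Equiv.ext fun Q ↦ ?_)
    rw [← e.apply_symm_apply Q, ← he, ← (e.symm Q).mk_rep, hc]
    simp
  · have hτn : τ ^ n = e.symm.permCongr (σ ^ n) := by
      rw [← Equiv.permCongrHom_coe, map_pow]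
      rfl
    have hpow := pow_apply_mk_eq_transvection₃
      (by simp [dotProduct_smul, mem_projLine_iff.1 hXA]) hc n (e.symm Q).rep_nonzero
    rw [mk_rep, hτn, Equiv.permCongr_apply] at hpow
    simp [← hpow, mul_smul]

end Coordinatization

theorem stmt_13_general (p : ℕ) [Fact p.Prime]
    (P : Type) (Lines : Finset (Set P))
    (hdes : ∃ pt : Projectivization (ZMod p) (Fin 3 → ZMod p) → P,
      Function.Bijective pt ∧
      ∀ l : Set P, l ∈ Lines ↔
        ∃ w : Projectivization (ZMod p) (Fin 3 → ZMod p),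
          l = pt '' {v | ∑ k, w.rep k * v.rep k = 0})
    (σ : Equiv.Perm P) (hauto : ∀ l ∈ Lines, ⇑σ '' l ∈ Lines)
    (hord : orderOf σ = p)
    (x : P) (L₀ : Set P) (hL₀ : L₀ ∈ Lines) (hx : x ∈ L₀)
    (hel1 : ∀ a ∈ L₀, σ a = a)
    (hel2 : ∀ l ∈ Lines, x ∈ l → ⇑σ '' l = l)
    (y z : P) (hy : y ∉ L₀) (hz : z ∉ L₀)
    (hnc : ∀ l ∈ Lines, ¬(x ∈ l ∧ y ∈ l ∧ z ∈ l))
    (N : ZMod p → Set P)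
    (hN : ∀ i : ZMod p, N i ∈ Lines ∧ y ∈ N i ∧ (σ ^ i.val) z ∈ N i)
    (Y : ZMod p → P)
    (hY : ∀ i : ZMod p, Y i ∈ N 0 ∧ (σ ^ i.val) (Y i) ∈ N 1)
    (E : Matrix (ZMod p) (ZMod p) (ZMod p))
    (hE : ∀ i j, (σ ^ (E i j).val) (Y i) ∈ N j) :
    ∀ i j : ZMod p, E i j = i * j := by
  obtain ⟨pt, hpt, hdes⟩ := hdes
  set e := Equiv.ofBijective pt hpt
  have hLines : ∀ l, l ∈ (Lines : Set (Set P)) ↔ ∃ W, l = e '' projLine W := by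
    simp_rw [projLine_eq]
    exact hdes
  obtain ⟨W₀, rfl⟩ := (hLines L₀).1 hL₀
  obtain ⟨X, hX, rfl⟩ := hx
  have hσ : σ ≠ 1 := fun h ↦ (Fact.out : p.Prime).one_lt.ne (by rw [← hord, h, orderOf_one])
  obtain ⟨c, hc, hpow⟩ := exists_pow_apply_eq_transvection₃ hLines hσ hauto hX hel1 hel2
  have hout : ∀ {Q}, Q ∉ e '' projLine W₀ → W₀.rep ⬝ᵥ (e.symm Q).rep ≠ 0 := fun hQ h ↦
    hQ ⟨_, mem_projLine_iff.2 h, e.apply_symm_apply _⟩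
  have hyzX : (e.symm y).rep ⬝ᵥ (e.symm z).rep ⨯₃ X.rep ≠ 0 := by
    rw [Ne, ← projCollinear_iff, projCollinear_iff_exists_mem hLines]
    rintro ⟨l, hl, hyl, hzl, hXl⟩
    simp only [e.apply_symm_apply] at hyl hzl
    exact hnc l hl ⟨hXl, hyl, hzl⟩
  have key : ∀ l ∈ Lines, ∀ (n m : ZMod p) (Q : P), y ∈ l → (σ ^ n.val) z ∈ l →
      (σ ^ m.val) Q ∈ l → (e.symm y).rep ⬝ᵥ
        transvection₃ W₀.rep (n • c • X.rep) (e.symm z).rep ⨯₃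
          transvection₃ W₀.rep (m • c • X.rep) (e.symm Q).rep = 0 := by
    intro l hl n m Q hyl hzl hQl
    rw [← e.apply_symm_apply y, ← (e.symm y).mk_rep] at hyl
    simp only [hpow, ZMod.natCast_zmod_val, mul_smul] at hzl hQl
    exact triple_product_eq_zero_of_mem hLines hl hyl hzl hQl
  intro i j
  refine eq_mul_of_collinear_transvection₃ (u := c • X.rep) (hout hy) (hout hz)
    (e.symm (Y i)).rep_nonzero (by simpa [dotProduct_smul, hc] using hyzX) ?_ ?_ ?_
  · simpa using key _ (hN 0).1 0 0 (Y i) (hN 0).2.1 (by simpa using (hN 0).2.2)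
      (by simpa using (hY i).1)
  · simpa using key _ (hN 1).1 1 i (Y i) (hN 1).2.1 (hN 1).2.2 (hY i).2
  · exact key _ (hN j).1 j (E i j) (Y i) (hN j).2.1 (hN j).2.2 (hE i j)

/-- If the projective plane is Desarguesian (isomorphic to `PG(2,p)`), then the exponent
matrix produced by `Ψ` is `E i j = i * j`, i.e. `Ψ(D, σ, y, z)` is the Fourier matrix. -/
theorem stmt_13 (p : ℕ) [Fact p.Prime]
    (P : Type) (Lines : Finset (Set P))
    (hP : Nat.card P = p ^ 2 + p + 1) (hL : Lines.card = p ^ 2 + p + 1)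
    (hlc : ∀ l ∈ Lines, l.ncard = p + 1)
    (hmeet : ∀ l ∈ Lines, ∀ l' ∈ Lines, l ≠ l' → (l ∩ l').ncard = 1)
    (hdes : ∃ pt : Projectivization (ZMod p) (Fin 3 → ZMod p) → P,
      Function.Bijective pt ∧
      ∀ l : Set P, l ∈ Lines ↔
        ∃ w : Projectivization (ZMod p) (Fin 3 → ZMod p),
          l = pt '' {v | ∑ k, w.rep k * v.rep k = 0})
    (σ : Equiv.Perm P) (hauto : ∀ l ∈ Lines, ⇑σ '' l ∈ Lines)
    (hord : orderOf σ = p)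
    (x : P) (L₀ : Set P) (hL₀ : L₀ ∈ Lines) (hx : x ∈ L₀)
    (hel1 : ∀ a ∈ L₀, σ a = a)
    (hel2 : ∀ l ∈ Lines, x ∈ l → ⇑σ '' l = l)
    (y z : P) (hy : y ∉ L₀) (hz : z ∉ L₀)
    (hnc : ∀ l ∈ Lines, ¬(x ∈ l ∧ y ∈ l ∧ z ∈ l))
    (N : ZMod p → Set P)
    (hN : ∀ i : ZMod p, N i ∈ Lines ∧ y ∈ N i ∧ (σ ^ i.val) z ∈ N i)
    (Y : ZMod p → P)
    (hY : ∀ i : ZMod p, Y i ∈ N 0 ∧ (σ ^ i.val) (Y i) ∈ N 1)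
    (E : Matrix (ZMod p) (ZMod p) (ZMod p))
    (hE : ∀ i j, (σ ^ (E i j).val) (Y i) ∈ N j) :
    ∀ i j : ZMod p, E i j = i * j :=
  stmt_13_general p P Lines hdes σ hauto hord x L₀ hL₀ hx hel1 hel2 y z hy hz hnc N hN Y hY E hE
end

section
/- If there exists a fully normalized Butson–Hadamard matrix of type (p,p) that is not the Fourier matrix (ξ_p^{ij}), then there exists a non-Desarguesian projective plane of order p. -/
/-!
The rows of `E` define an affine plane of order `p` on `𝔽_p²`, with lines `y = E i x + c` and
`x = a`. Orthogonality of two rows `i ≠ j` of `H` says `∑ₖ ζ ^ (E i k - E j k) = 0`; as the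
minimal polynomial of `ζ` is `1 + X + ⋯ + X ^ (p - 1)`, a vanishing sum of `p` powers of `ζ`
uses every exponent exactly once, so `x ↦ E i x - E j x` is a bijection and non-parallel lines meet exactly once.

If the projective completion were `PG(2, p)`, take the frame formed by the points at infinity of
slope `0` and of the vertical lines and the origin. Horizontal and vertical lines force the
affine points to have coordinates `(U x, V y, 1)`, the lines through the point at infinity of
slope `1` make `V` additive, hence `𝔽_p`-linear, and then the lines through the point at
infinity of slope `i` give `E i x = i x`: `E` would be the Fourier matrix.
-/

open Finset Matrix Polynomial

theorem ZMod.eq_mul_of_map_add {p : ℕ} {f : ZMod p → ZMod p}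
    (hf : ∀ a b, f (a + b) = f a + f b) (t : ZMod p) : f t = t * f 1 := by
  simpa using ((AddMonoidHom.mk' f hf).toZModLinearMap p).map_smul t 1

theorem IsPrimitiveRoot.pow_val_sub_mul_pow_val {M : Type*} [CommMonoid M] {ζ : M} {n : ℕ}
    [NeZero n] (hζ : IsPrimitiveRoot ζ n) (a b : ZMod n) :
    ζ ^ (a - b).val * ζ ^ b.val = ζ ^ a.val := by
  rw [← pow_add, ← pow_mod_orderOf, ← pow_mod_orderOf ζ a.val, ← hζ.eq_orderOf]
  congr 1
  rw [← ZMod.natCast_eq_natCast_iff']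
  simp

theorem IsPrimitiveRoot.coeff_eq_of_sum_mul_pow_eq_zero {K : Type*} [Field K] [CharZero K]
    {p : ℕ} [hp : Fact p.Prime] {ζ : K} (hζ : IsPrimitiveRoot ζ p) (n : ZMod p → ℚ)
    (h : ∑ a, (n a : K) * ζ ^ a.val = 0) (a b : ZMod p) : n a = n b := by
  set P : ℚ[X] := ∑ a, C (n a) * X ^ a.val
  have hcoeff : ∀ a : ZMod p, P.coeff a.val = n a := by
    intro a
    simp [P, coeff_X_pow, ZMod.val_injective p |>.eq_iff]
  have hdvd : cyclotomic p ℚ ∣ P := by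
    rw [cyclotomic_eq_minpoly_rat hζ hp.out.pos]
    exact minpoly.dvd _ _ (by simpa [P] using h)
  obtain ⟨Q, hPQ⟩ := hdvd
  have hQ : Q.natDegree = 0 := by
    rcases eq_or_ne Q 0 with rfl | hQ0
    · rfl
    have hdeg := natDegree_mul (cyclotomic_ne_zero p ℚ) hQ0
    rw [← hPQ, natDegree_cyclotomic, Nat.totient_prime hp.out] at hdeg
    have : P.natDegree ≤ p - 1 := natDegree_sum_le_of_forall_le _ _ fun a _ =>
      (natDegree_C_mul_X_pow_le _ _).trans (Nat.le_sub_one_of_lt (ZMod.val_lt a))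
    omega
  have hconst : ∀ a : ZMod p, n a = Q.coeff 0 := by
    intro a
    rw [← hcoeff, hPQ, eq_C_of_natDegree_eq_zero hQ, coeff_mul_C, cyclotomic_prime,
      finsetSum_coeff]
    simp [coeff_X_pow, ZMod.val_lt a]
  rw [hconst a, hconst b]

theorem IsPrimitiveRoot.bijective_of_sum_pow_eq_zero {K : Type*} [Field K] [CharZero K]
    {p : ℕ} [Fact p.Prime] {ζ : K} (hζ : IsPrimitiveRoot ζ p) (d : ZMod p → ZMod p)
    (h : ∑ k, ζ ^ (d k).val = 0) : Function.Bijective d := by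
  classical
  set n : ZMod p → ℚ := fun a => #{k | d k = a}
  have hn : ∑ a, (n a : K) * ζ ^ a.val = 0 := by
    rw [← h, ← sum_fiberwise univ d fun k => ζ ^ (d k).val]
    refine sum_congr rfl fun a _ => ?_
    rw [sum_congr rfl fun k hk => by rw [(mem_filter.mp hk).2]]
    simp [n]
  refine Function.Surjective.bijective_of_finite fun a => ?_
  have hpos : 0 < n (d 0) := by
    simpa [n] using ⟨0, by simp⟩
  rw [hζ.coeff_eq_of_sum_mul_pow_eq_zero n hn (d 0) a] at hpos
  simpa [n, Finset.Nonempty] using hpos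

theorem sub_bijective_of_mul_conjTranspose {p : ℕ} [Fact p.Prime]
    (E : Matrix (ZMod p) (ZMod p) (ZMod p)) (H : Matrix (ZMod p) (ZMod p) ℂ)
    (hH : ∀ i j, H i j = Complex.exp (2 * Real.pi * Complex.I / p) ^ (E i j).val)
    (hBH : H * H.conjTranspose = (p : ℂ) • 1) {i j : ZMod p} (hij : i ≠ j) :
    Function.Bijective fun k => E i k - E j k := by
  set ζ := Complex.exp (2 * Real.pi * Complex.I / p)
  have hp0 : p ≠ 0 := (Fact.out : p.Prime).ne_zero
  have hζ : IsPrimitiveRoot ζ p := Complex.isPrimitiveRoot_exp p hp0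
  have hnorm (m : ℕ) : ‖ζ ^ m‖ = 1 := by rw [norm_pow, hζ.norm'_eq_one hp0, one_pow]
  refine hζ.bijective_of_sum_pow_eq_zero _ ?_
  have hrow := congrFun (congrFun hBH i) j
  rw [mul_apply, Matrix.smul_apply, one_apply_ne hij, smul_zero] at hrow
  rw [← hrow]
  refine sum_congr rfl fun k _ => ?_
  rw [conjTranspose_apply, hH, hH, RCLike.star_def, ← Complex.inv_eq_conj (hnorm _),
    ← hζ.pow_val_sub_mul_pow_val (E i k) (E j k),
    mul_inv_cancel_right₀ (pow_ne_zero _ (hζ.ne_zero hp0))]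

namespace ButsonPlane

variable {p : ℕ}

-- `.inl (x, y)` is an affine point, `.inr (some i)` the point at infinity of the lines
-- `y = E i x + c` of slope `i`, and `.inr none` that of the vertical lines.
abbrev Point (p : ℕ) := (ZMod p × ZMod p) ⊕ Option (ZMod p)

abbrev LineIndex (p : ℕ) := (ZMod p × ZMod p) ⊕ (ZMod p ⊕ Unit)

def slopeLine (E : Matrix (ZMod p) (ZMod p) (ZMod p)) (i c : ZMod p) : Set (Point p) :=
  {r | r.elim (fun s => s.2 = E i s.1 + c) (· = some i)}

def verticalLine (a : ZMod p) : Set (Point p) :=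
  {r | r.elim (fun s => s.1 = a) (· = none)}

def lineAtInfinity : Set (Point p) := Set.range Sum.inr

def line (E : Matrix (ZMod p) (ZMod p) (ZMod p)) : LineIndex p → Set (Point p)
  | .inl (i, c) => slopeLine E i c
  | .inr (.inl a) => verticalLine a
  | .inr (.inr ()) => lineAtInfinity

variable {E : Matrix (ZMod p) (ZMod p) (ZMod p)} {i j c c' a a' x y : ZMod p}
  {t : Option (ZMod p)}

@[simp] theorem inl_mem_slopeLine : Sum.inl (x, y) ∈ slopeLine E i c ↔ y = E i x + c := Iff.rfl
@[simp] theorem inr_mem_slopeLine : Sum.inr t ∈ slopeLine E i c ↔ t = some i := Iff.rfl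
@[simp] theorem inl_mem_verticalLine : Sum.inl (x, y) ∈ verticalLine a ↔ x = a := Iff.rfl
@[simp] theorem inr_mem_verticalLine : Sum.inr t ∈ verticalLine a ↔ t = none := Iff.rfl
@[simp] theorem inl_notMem_lineAtInfinity (s : ZMod p × ZMod p) :
    Sum.inl s ∉ (lineAtInfinity : Set (Point p)) := by simp [lineAtInfinity]
@[simp] theorem inr_mem_lineAtInfinity : Sum.inr t ∈ (lineAtInfinity : Set (Point p)) :=
  ⟨t, rfl⟩

theorem ncard_line [NeZero p] (E : Matrix (ZMod p) (ZMod p) (ZMod p)) (l : LineIndex p) :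
    (line E l).ncard = p + 1 := by
  have hparam :
      ∃ f : Option (ZMod p) → Point p, Function.Injective f ∧ Set.range f = line E l := by
    rcases l with ⟨i, c⟩ | a | ⟨⟩
    · refine ⟨fun o => o.elim (.inr (some i)) fun x => .inl (x, E i x + c), ?_, ?_⟩
      · rintro (_ | x) (_ | x') <;> simp +contextual
      · ext (⟨x, y⟩ | t) <;> simp [line, Option.exists, eq_comm]
    · refine ⟨fun o => o.elim (.inr none) fun y => .inl (a, y), ?_, ?_⟩
      · rintro (_ | y) (_ | y') <;> simp
      · ext (⟨x, y⟩ | t) <;> simp [line, Option.exists, eq_comm]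
    · exact ⟨Sum.inr, Sum.inr_injective, rfl⟩
  obtain ⟨f, hf, hrange⟩ := hparam
  rw [← hrange, Set.ncard_range_of_injective hf, Nat.card_eq_fintype_card, Fintype.card_option,
    ZMod.card]

theorem slopeLine_inter_slopeLine_of_ne (hc : c ≠ c') :
    slopeLine E i c ∩ slopeLine E i c' = {.inr (some i)} := by
  ext (⟨x, y⟩ | t) <;> simp
  rintro rfl h
  exact hc (add_left_cancel h)

theorem exists_slopeLine_inter_slopeLine (hE : Function.Bijective fun x => E i x - E j x)
    (hij : i ≠ j) : ∃ z, slopeLine E i c ∩ slopeLine E j c' = {z} := by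
  obtain ⟨x₀, hx₀⟩ := hE.2 (c' - c)
  refine ⟨.inl (x₀, E i x₀ + c), ?_⟩
  ext (⟨x, y⟩ | t) <;> simp
  · constructor
    · rintro ⟨rfl, h⟩
      obtain rfl : x = x₀ := hE.1 (by linear_combination h - hx₀)
      exact ⟨rfl, rfl⟩
    · rintro ⟨rfl, rfl⟩
      exact ⟨rfl, by linear_combination hx₀⟩
  · rintro rfl h
    exact hij (Option.some.inj h)

theorem slopeLine_inter_verticalLine :
    slopeLine E i c ∩ verticalLine a = {.inl (a, E i a + c)} := by
  ext (⟨x, y⟩ | t) <;> simp +contextual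
  grind

theorem slopeLine_inter_lineAtInfinity :
    slopeLine E i c ∩ lineAtInfinity = {.inr (some i)} := by
  ext (⟨x, y⟩ | t) <;> simp

theorem verticalLine_inter_verticalLine_of_ne (ha : a ≠ a') :
    verticalLine a ∩ verticalLine a' = ({.inr none} : Set (Point p)) := by
  ext (⟨x, y⟩ | t) <;> simp
  rintro rfl
  exact ha

theorem verticalLine_inter_lineAtInfinity :
    verticalLine a ∩ lineAtInfinity = ({.inr none} : Set (Point p)) := by
  ext (⟨x, y⟩ | t) <;> simp


theorem exists_line_inter_line_eq_singleton
    (hE : ∀ i j : ZMod p, i ≠ j → Function.Bijective fun x => E i x - E j x)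
    {l l' : LineIndex p} (h : l ≠ l') : ∃ z, line E l ∩ line E l' = {z} := by
  match l, l' with
  | .inl (i, c), .inl (j, c') =>
    by_cases hij : i = j
    · subst hij
      exact ⟨_, slopeLine_inter_slopeLine_of_ne fun hc => h (by rw [hc])⟩
    · exact exists_slopeLine_inter_slopeLine (hE i j hij) hij
  | .inl _, .inr (.inl _) => exact ⟨_, slopeLine_inter_verticalLine⟩
  | .inl _, .inr (.inr ()) => exact ⟨_, slopeLine_inter_lineAtInfinity⟩
  | .inr (.inl _), .inl _ => exact ⟨_, (Set.inter_comm _ _).trans slopeLine_inter_verticalLine⟩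
  | .inr (.inl a), .inr (.inl a') =>
    exact ⟨_, verticalLine_inter_verticalLine_of_ne fun ha => h (by rw [ha])⟩
  | .inr (.inl _), .inr (.inr ()) => exact ⟨_, verticalLine_inter_lineAtInfinity⟩
  | .inr (.inr ()), .inl _ =>
    exact ⟨_, (Set.inter_comm _ _).trans slopeLine_inter_lineAtInfinity⟩
  | .inr (.inr ()), .inr (.inl _) =>
    exact ⟨_, (Set.inter_comm _ _).trans verticalLine_inter_lineAtInfinity⟩
  | .inr (.inr ()), .inr (.inr ()) => exact absurd rfl h

theorem ncard_line_inter_line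
    (hE : ∀ i j : ZMod p, i ≠ j → Function.Bijective fun x => E i x - E j x)
    {l l' : LineIndex p} (h : l ≠ l') : (line E l ∩ line E l').ncard = 1 :=
  Set.ncard_eq_one.mpr (exists_line_inter_line_eq_singleton hE h)

theorem line_injective [NeZero p]
    (hE : ∀ i j : ZMod p, i ≠ j → Function.Bijective fun x => E i x - E j x) :
    Function.Injective (line E) := by
  intro l l' hl
  by_contra h
  have := ncard_line_inter_line hE h
  rw [hl, Set.inter_self, ncard_line] at this
  exact NeZero.ne p (by omega)

def IsCoordinatization (E : Matrix (ZMod p) (ZMod p) (ZMod p))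
    (κ : Point p → Fin 3 → ZMod p) : Prop :=
  ∀ l : LineIndex p, ∃ w : Fin 3 → ZMod p, ∀ r, r ∈ line E l ↔ w ⬝ᵥ κ r = 0

structure IsStandardCoordinatization (E : Matrix (ZMod p) (ZMod p) (ZMod p))
    (κ : Point p → Fin 3 → ZMod p) : Prop where
  isCoordinatization : IsCoordinatization E κ
  inr_some_zero : κ (.inr (some 0)) = Pi.single 0 1
  inr_none : κ (.inr none) = Pi.single 1 1
  inl_zero : κ (.inl (0, 0)) = Pi.single 2 1

variable {κ : Point p → Fin 3 → ZMod p}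

theorem IsCoordinatization.mem_line_of_eq_smul (hκ : IsCoordinatization E κ) {r s : Point p}
    {a : ZMod p} (h : κ r = a • κ s) {l : LineIndex p} (hs : s ∈ line E l) :
    r ∈ line E l := by
  obtain ⟨w, hw⟩ := hκ l
  rw [hw, h, dotProduct_smul, (hw s).1 hs, smul_zero]

theorem inl_zero_notMem_line_of_mem {l : LineIndex p} (h0 : .inr (some 0) ∈ line E l)
    (h : .inr none ∈ line E l) : .inl (0, 0) ∉ line E l := by
  rcases l with ⟨i, c⟩ | a | ⟨⟩ <;> simp_all [line]

def abscissa (κ : Point p → Fin 3 → ZMod p) (x : ZMod p) : ZMod p := κ (.inl (x, 0)) 0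

def ordinate (κ : Point p → Fin 3 → ZMod p) (y : ZMod p) : ZMod p := κ (.inl (0, y)) 1

theorem IsStandardCoordinatization.abscissa_zero
    (hκ : IsStandardCoordinatization E κ) : abscissa κ 0 = 0 := by simp [abscissa, hκ.inl_zero]

theorem IsStandardCoordinatization.ordinate_zero
    (hκ : IsStandardCoordinatization E κ) : ordinate κ 0 = 0 := by simp [ordinate, hκ.inl_zero]

variable [Fact p.Prime] {ρ : Point p → Fin 3 → ZMod p}

theorem IsCoordinatization.of_eq_smul_mulVec (hρ : IsCoordinatization E ρ)
    (A : Matrix (Fin 3) (Fin 3) (ZMod p)) (c : Point p → ZMod p) (hc : ∀ r, c r ≠ 0)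
    (h : ∀ r, ρ r = c r • A *ᵥ κ r) : IsCoordinatization E κ := by
  intro l
  obtain ⟨w, hw⟩ := hρ l
  refine ⟨w ᵥ* A, fun r => ?_⟩
  rw [hw, h, dotProduct_smul, smul_eq_mul, Matrix.dotProduct_mulVec, mul_eq_zero,
    or_iff_right (hc r)]

theorem exists_isStandardCoordinatization
    {pt : Projectivization (ZMod p) (Fin 3 → ZMod p) → Point p} (hpt : Function.Bijective pt)
    (hl : ∀ l, l ∈ Set.range (line E) ↔
      ∃ w : Projectivization (ZMod p) (Fin 3 → ZMod p),
        l = pt '' {v | w.rep ⬝ᵥ v.rep = 0}) :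
    ∃ κ, IsStandardCoordinatization E κ := by
  set e := Equiv.ofBijective pt hpt
  set ρ : Point p → Fin 3 → ZMod p := fun r => (e.symm r).rep
  have hρ : IsCoordinatization E ρ := by
    intro l
    obtain ⟨W, hW⟩ := (hl _).1 ⟨l, rfl⟩
    exact ⟨W.rep, fun r => by rw [hW, show pt = e from rfl, Set.mem_image_equiv]; rfl⟩
  have hzeroSet (w : Fin 3 → ZMod p) (hw : w ≠ 0) :
      ∃ l, ∀ r, w ⬝ᵥ ρ r = 0 → r ∈ line E l := by
    obtain ⟨l, hl'⟩ := (hl _).2 ⟨Projectivization.mk (ZMod p) w hw, rfl⟩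
    obtain ⟨a, ha⟩ := Projectivization.exists_smul_eq_mk_rep (ZMod p) w hw
    refine ⟨l, fun r hr => ?_⟩
    rw [hl', show pt = e from rfl, Set.mem_image_equiv]
    show (Projectivization.mk (ZMod p) w hw).rep ⬝ᵥ ρ r = 0
    rw [← ha, smul_dotProduct, hr, smul_zero]
  -- the columns of `M` are the frame vectors; `M⁻¹` sends them to the standard basis
  set M : Matrix (Fin 3) (Fin 3) (ZMod p) :=
    Matrix.of fun i j => ![ρ (.inr (some 0)), ρ (.inr none), ρ (.inl (0, 0))] j i
  have hM : IsUnit M.det := by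
    rw [isUnit_iff_ne_zero]
    intro h0
    obtain ⟨w, hw, hwM⟩ := Matrix.exists_vecMul_eq_zero_iff.2 h0
    obtain ⟨l, hl⟩ := hzeroSet w hw
    exact inl_zero_notMem_line_of_mem (hl _ (congrFun hwM 0)) (hl _ (congrFun hwM 1))
      (hl _ (congrFun hwM 2))
  have hMρ (j : Fin 3) (r : Point p) (hr : ρ r = M *ᵥ Pi.single j 1) :
      M⁻¹ *ᵥ ρ r = Pi.single j 1 := by
    rw [hr, mulVec_mulVec, nonsing_inv_mul _ hM, one_mulVec]
  refine ⟨fun r => M⁻¹ *ᵥ ρ r,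
    ⟨hρ.of_eq_smul_mulVec M 1 (fun _ => one_ne_zero) fun r => ?_,
    hMρ 0 _ ?_, hMρ 1 _ ?_, hMρ 2 _ ?_⟩⟩
  · rw [Pi.one_apply, one_smul, mulVec_mulVec, mul_nonsing_inv _ hM, one_mulVec]
  all_goals rw [mulVec_single_one]; rfl

namespace IsStandardCoordinatization

variable (hκ : IsStandardCoordinatization E κ)
include hκ

theorem mem_lineAtInfinity_iff (r : Point p) : r ∈ lineAtInfinity ↔ κ r 2 = 0 := by
  obtain ⟨w, hw⟩ := hκ.isCoordinatization (.inr (.inr ()))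
  have h0 : w 0 = 0 := by simpa [hκ.inr_some_zero] using (hw (.inr (some 0))).1 (by simp [line])
  have h1 : w 1 = 0 := by simpa [hκ.inr_none] using (hw (.inr none)).1 (by simp [line])
  have h2 : w 2 ≠ 0 := by simpa [hκ.inl_zero, line] using (hw (.inl (0, 0))).not
  rw [show lineAtInfinity = line E (.inr (.inr ())) from rfl, hw, vec3_dotProduct, h0, h1]
  simp [h2]

theorem exists_affine_normalization : ∃ κ' : Point p → Fin 3 → ZMod p,
    IsStandardCoordinatization E κ' ∧ ∀ s, κ' (.inl s) 2 = 1 := by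
  have hc (s : ZMod p × ZMod p) : κ (.inl s) 2 ≠ 0 := by
    simpa using (hκ.mem_lineAtInfinity_iff (.inl s)).not
  set c : Point p → ZMod p := Sum.elim (fun s => κ (.inl s) 2) 1
  have hc' (r : Point p) : c r ≠ 0 := by rcases r with s | t <;> simp [c, hc]
  refine ⟨fun r => (c r)⁻¹ • κ r, ⟨?_, ?_, ?_, ?_⟩, fun s => ?_⟩
  · refine IsCoordinatization.of_eq_smul_mulVec hκ.isCoordinatization 1 c hc' fun r => ?_
    rw [Matrix.one_mulVec, smul_inv_smul₀ (hc' r)]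
  · simp [c, hκ.inr_some_zero]
  · simp [c, hκ.inr_none]
  · simp [c, hκ.inl_zero]
  · simp [c, hc]

theorem inr_apply_two (t : Option (ZMod p)) : κ (.inr t) 2 = 0 :=
  (hκ.mem_lineAtInfinity_iff _).1 (by simp)

theorem inr_some_apply_zero_ne_zero (i : ZMod p) : κ (.inr (some i)) 0 ≠ 0 := by
  intro h
  have hsmul : κ (.inr (some i)) = κ (.inr (some i)) 1 • κ (.inr none) := by
    ext j
    fin_cases j <;> simp [hκ.inr_none, h, hκ.inr_apply_two]
  have := hκ.isCoordinatization.mem_line_of_eq_smul hsmul (l := .inr (.inl 0)) (by simp [line])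
  simp [line] at this

variable (haff : ∀ s, κ (.inl s) 2 = 1)
include haff

theorem apply_inl_zero (x y : ZMod p) : κ (.inl (x, y)) 0 = abscissa κ x := by
  obtain ⟨w, hw⟩ := hκ.isCoordinatization (.inr (.inl x))
  have h1 : w 1 = 0 := by simpa [hκ.inr_none] using (hw (.inr none)).1 (by simp [line])
  have h0 : w 0 ≠ 0 := by simpa [hκ.inr_some_zero, line] using (hw (.inr (some 0))).not
  have hxy := (hw (.inl (x, y))).1 (by simp [line])
  have hx0 := (hw (.inl (x, 0))).1 (by simp [line])
  rw [vec3_dotProduct, haff, h1] at hxy hx0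
  unfold abscissa
  exact mul_left_cancel₀ h0 (by linear_combination hxy - hx0)

theorem apply_inl_one (hrow0 : ∀ x, E 0 x = 0) (x y : ZMod p) :
    κ (.inl (x, y)) 1 = ordinate κ y := by
  obtain ⟨w, hw⟩ := hκ.isCoordinatization (.inl (0, y))
  have h0 : w 0 = 0 := by simpa [hκ.inr_some_zero] using (hw (.inr (some 0))).1 (by simp [line])
  have h1 : w 1 ≠ 0 := by simpa [hκ.inr_none, line] using (hw (.inr none)).not
  have hxy := (hw (.inl (x, y))).1 (by simp [line, hrow0])
  have h0y := (hw (.inl (0, y))).1 (by simp [line, hrow0])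
  rw [vec3_dotProduct, haff, h0] at hxy h0y
  unfold ordinate
  exact mul_left_cancel₀ h1 (by linear_combination hxy - h0y)

theorem ordinate_one_ne_zero (hrow0 : ∀ x, E 0 x = 0) (h10 : E 1 0 = 0) :
    ordinate κ 1 ≠ 0 := by
  intro h
  have hsmul : κ (.inl (0, 1)) = (1 : ZMod p) • κ (.inl (0, 0)) := by
    ext j
    fin_cases j <;> simp [hκ.apply_inl_zero haff, hκ.apply_inl_one haff hrow0, haff, h,
      hκ.ordinate_zero]
  have := hκ.isCoordinatization.mem_line_of_eq_smul hsmul (l := .inl (1, 0)) (by simp [line, h10])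
  simp [line, h10] at this

theorem inr_some_mul_ordinate_sub (hrow0 : ∀ x, E 0 x = 0) (hcol0 : ∀ i, E i 0 = 0)
    (i c x : ZMod p) :
    κ (.inr (some i)) 0 * (ordinate κ (E i x + c) - ordinate κ c) =
      κ (.inr (some i)) 1 * abscissa κ x := by
  obtain ⟨w, hw⟩ := hκ.isCoordinatization (.inl (i, c))
  have h1 : w 1 ≠ 0 := by simpa [hκ.inr_none, line] using (hw (.inr none)).not
  have hinf := (hw (.inr (some i))).1 (by simp [line])
  have hx := (hw (.inl (x, E i x + c))).1 (by simp [line])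
  have h0 := (hw (.inl (0, c))).1 (by simp [line, hcol0])
  rw [vec3_dotProduct, hκ.inr_apply_two] at hinf
  rw [vec3_dotProduct, hκ.apply_inl_zero haff, hκ.apply_inl_one haff hrow0, haff] at hx h0
  rw [hκ.abscissa_zero] at h0
  exact mul_left_cancel₀ h1 (by
    linear_combination κ (.inr (some i)) 0 * (hx - h0) - abscissa κ x * hinf)

theorem eq_mul (hE : ∀ i : ZMod p, E 0 i = 0 ∧ E i 0 = 0 ∧ E 1 i = i ∧ E i 1 = i)
    (i x : ZMod p) : E i x = i * x := by
  have hrel := hκ.inr_some_mul_ordinate_sub haff (fun x => (hE x).1) (fun i => (hE i).2.1)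
  have hline (j y : ZMod p) :
      κ (.inr (some j)) 0 * ordinate κ (E j y) = κ (.inr (some j)) 1 * abscissa κ y := by
    simpa [hκ.ordinate_zero] using hrel j 0 y
  have hadd (y c : ZMod p) : ordinate κ (y + c) = ordinate κ y + ordinate κ c := by
    refine mul_left_cancel₀ (hκ.inr_some_apply_zero_ne_zero 1) ?_
    have hc := hrel 1 c y
    have h0 := hline 1 y
    rw [(hE y).2.2.1] at hc h0
    linear_combination hc - h0
  have hslope (j y : ZMod p) :
      κ (.inr (some j)) 0 * (E j y * ordinate κ 1) = κ (.inr (some j)) 1 * abscissa κ y := by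
    rw [← ZMod.eq_mul_of_map_add hadd]
    exact hline j y
  have c1 := hslope i x
  have c2 := hslope i 1
  have c3 := hslope 1 x
  have c4 := hslope 1 1
  rw [(hE i).2.2.2] at c2
  rw [(hE x).2.2.1] at c3
  rw [(hE 1).2.2.1] at c4
  set α := κ (.inr (some i)) 0
  set β := κ (.inr (some i)) 1
  set α₁ := κ (.inr (some 1)) 0
  set V₁ := ordinate κ 1
  have hα : α ≠ 0 := hκ.inr_some_apply_zero_ne_zero i
  have hα₁ : α₁ ≠ 0 := hκ.inr_some_apply_zero_ne_zero 1
  have hV₁ : V₁ ≠ 0 := hκ.ordinate_one_ne_zero haff (fun x => (hE x).1) (hE 1).2.1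
  -- `c3` and `c4` make `abscissa κ` proportional to `ordinate κ`; then `c1` and `c2` compare
  -- `E i x` with `i * x`
  refine mul_right_cancel₀ (mul_ne_zero (mul_ne_zero hα hα₁) (pow_ne_zero 2 hV₁)) ?_
  linear_combination α₁ * V₁ * c1 + β * abscissa κ x * c4 - β * abscissa κ 1 * c3 -
    α₁ * x * V₁ * c2

end IsStandardCoordinatization

end ButsonPlane

open ButsonPlane

/-- If there is a fully normalized Butson–Hadamard matrix of type `(p,p)` which is not
the Fourier matrix, then there exists a non-Desarguesian projective plane of order `p`. -/
theorem stmt_14 (p : ℕ) [Fact p.Prime]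
    (E : Matrix (ZMod p) (ZMod p) (ZMod p))
    (H : Matrix (ZMod p) (ZMod p) ℂ)
    (hH : ∀ i j, H i j = Complex.exp (2 * Real.pi * Complex.I / p) ^ (E i j).val)
    (hBH : H * H.conjTranspose = (p : ℂ) • 1)
    (hnorm : ∀ i : ZMod p, E 0 i = 0 ∧ E i 0 = 0 ∧ E 1 i = i ∧ E i 1 = i)
    (hnF : ∃ i j : ZMod p, E i j ≠ i * j) :
    ∃ (P : Type) (Lines : Finset (Set P)),
      Nat.card P = p ^ 2 + p + 1 ∧ Lines.card = p ^ 2 + p + 1 ∧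
      (∀ l ∈ Lines, l.ncard = p + 1) ∧
      (∀ l ∈ Lines, ∀ l' ∈ Lines, l ≠ l' → (l ∩ l').ncard = 1) ∧
      ¬ ∃ pt : Projectivization (ZMod p) (Fin 3 → ZMod p) → P,
          Function.Bijective pt ∧
          ∀ l : Set P, l ∈ Lines ↔
            ∃ w : Projectivization (ZMod p) (Fin 3 → ZMod p),
              l = pt '' {v | ∑ k, w.rep k * v.rep k = 0} := by
  classical
  have hE (i j : ZMod p) (hij : i ≠ j) : Function.Bijective fun x => E i x - E j x :=
    sub_bijective_of_mul_conjTranspose E H hH hBH hij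
  refine ⟨Point p, univ.image (line E), ?_, ?_, ?_, ?_, ?_⟩
  · simp [Nat.card_eq_fintype_card]
    ring
  · rw [card_image_of_injective _ (line_injective hE)]
    simp
    ring
  · intro l hl
    obtain ⟨l, -, rfl⟩ := mem_image.1 hl
    exact ncard_line E l
  · simp only [mem_image, mem_univ, true_and]
    rintro _ ⟨l, rfl⟩ _ ⟨l', rfl⟩ h
    exact ncard_line_inter_line hE fun hl => h (by rw [hl])
  · rintro ⟨pt, hpt, hl⟩
    obtain ⟨κ, hκ⟩ := exists_isStandardCoordinatization (E := E) hpt fun l =>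
      Iff.trans (by simp) (hl l)
    obtain ⟨κ', hκ', haff⟩ := hκ.exists_affine_normalization
    obtain ⟨i, j, hij⟩ := hnF
    exact hij (hκ'.eq_mul haff hnorm i j)
end
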